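/- Let K be the abstract simplicial complex on V = {A,B,C,D,E,F,G,Z} whose facets are the nineteen facets of ∂H_8 other than {A,B,G,Z}. Then every labelling λ : V → {1,2,3,4} with λ(A)=1, λ(B)=2, λ(G)=3, λ(Z)=4 that makes {C,D,E,F} rainbow also makes some facet of K other than {C,D,E,F} rainbow. -/
import Mathlib


/-- The eight vertices of Grünbaum's polytope `H₈`. -/
abbrev H8V := Fin 8

namespace H8
def A : H8V := 0
def B : H8V := 1
def C : H8V := 2
def D : H8V := 3
def E : H8V := 4
def F : H8V := 5
def G : H8V := 6
def Z : H8V := 7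

/-- The twenty facets of the boundary complex of `H₈`. -/
def facets : Finset (Finset H8V) :=
  { {A,B,C,D}, {A,B,C,G}, {A,B,D,E}, {A,B,E,F}, {A,B,F,Z},
    {A,B,G,Z}, {A,C,D,Z}, {A,C,G,Z}, {A,D,E,Z}, {A,E,F,Z},
    {B,C,D,E}, {B,C,E,F}, {B,C,F,G}, {B,F,G,Z}, {C,D,E,F},
    {C,D,F,G}, {C,D,G,Z}, {D,E,F,G}, {D,E,G,Z}, {E,F,G,Z} }

def σ0 : Finset H8V := {A,B,G,Z}
def σ1 : Finset H8V := {C,D,E,F}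

/-- A set of vertices is rainbow under a labelling `φ` if `φ` is injective on it.
Labels `1,2,3,4` are represented by `Fin 4` (label `k` being `k-1`). -/
def Rainbow (φ : H8V → Fin 4) (σ : Finset H8V) : Prop := Set.InjOn φ ↑σ

end H8


open H8 in
private lemma h8_key : ∀ c d e f : Fin 4, c ≠ d → c ≠ e → c ≠ f → d ≠ e → d ≠ f → e ≠ f →
    ∃ τ ∈ facets.erase σ0, τ ≠ σ1 ∧ ((τ.image ![0,1,c,d,e,f,2,3]).card = τ.card) := by
  decide

open H8 in
/-- Let `K` consist of the nineteen facets of `∂H₈` other than `σ₀ = ABGZ`.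
Every labelling fixing the labels of `A,B,G,Z` to `1,2,3,4` (here `0,1,2,3`)
which makes `σ₁ = CDEF` rainbow makes some other facet of `K` rainbow. -/
theorem h8_minus_facet_rainbow (φ : H8V → Fin 4)
    (hA : φ A = 0) (hB : φ B = 1) (hG : φ G = 2) (hZ : φ Z = 3)
    (h1 : Rainbow φ σ1) :
    ∃ τ ∈ facets.erase σ0, τ ≠ σ1 ∧ Rainbow φ τ := by
  have hC : C ∈ (↑σ1 : Set H8V) := by simp [σ1]
  have hD : D ∈ (↑σ1 : Set H8V) := by simp [σ1]
  have hE : E ∈ (↑σ1 : Set H8V) := by simp [σ1]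
  have hF : F ∈ (↑σ1 : Set H8V) := by simp [σ1]
  have hcd : φ C ≠ φ D := fun h => by have := h1 hC hD h; simp [C, D] at this
  have hce : φ C ≠ φ E := fun h => by have := h1 hC hE h; simp [C, E] at this
  have hcf : φ C ≠ φ F := fun h => by have := h1 hC hF h; simp [C, F] at this
  have hde : φ D ≠ φ E := fun h => by have := h1 hD hE h; simp [D, E] at this
  have hdf : φ D ≠ φ F := fun h => by have := h1 hD hF h; simp [D, F] at this
  have hef : φ E ≠ φ F := fun h => by have := h1 hE hF h; simp [E, F] at this
  have hφ : φ = ![0, 1, φ C, φ D, φ E, φ F, 2, 3] := by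
    funext x
    fin_cases x <;> simp_all [A, B, C, D, E, F, G, Z] <;> rfl
  obtain ⟨τ, hτ, hτ1, hcard⟩ := h8_key (φ C) (φ D) (φ E) (φ F) hcd hce hcf hde hdf hef
  refine ⟨τ, hτ, hτ1, ?_⟩
  rw [Rainbow, ← Finset.card_image_iff, hφ]
  exact hcard
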